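/- The Toffoli (2-CN) gate decomposes as: Toffoli = (CV on qubits 2→3) · (CNOT on 1→2) · (CV† on 2→3) · (CNOT on 1→2) · (CV on 1→3), where CV is the controlled-V gate with V² = σ_x. That is, the product of these five two-qubit gates (extended to three qubits) equals the Toffoli gate |a,b,c⟩ ↦ |a, b, (a∧b)⊕c⟩. -/

import Mathlib

open Matrix Complex
open scoped Matrix Kronecker

noncomputable section

def σx : Matrix (Fin 2) (Fin 2) ℂ := !![0, 1; 1, 0]

/-- The V gate, a square root of NOT. -/
def Vgate : Matrix (Fin 2) (Fin 2) ℂ :=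
  (2 : ℂ)⁻¹ • !![1 + Complex.I, 1 - Complex.I; 1 - Complex.I, 1 + Complex.I]

/-- Controlled gate `C-W = |0⟩⟨0|⊗I + |1⟩⟨1|⊗W` on a pair of qubits. -/
def ctrl (W : Matrix (Fin 2) (Fin 2) ℂ) : Matrix (Fin 2 × Fin 2) (Fin 2 × Fin 2) ℂ :=
  Matrix.of fun p q =>
    if p.1 = q.1 then (if q.1 = 1 then W p.2 q.2 else if p.2 = q.2 then 1 else 0) else 0

/-- C-V on qubits 2 (control) and 3 (target), identity on qubit 1. -/
def CV23 : Matrix (Fin 2 × Fin 2 × Fin 2) (Fin 2 × Fin 2 × Fin 2) ℂ :=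
  (1 : Matrix (Fin 2) (Fin 2) ℂ) ⊗ₖ ctrl Vgate

/-- CNOT on qubits 1 (control) and 2 (target), identity on qubit 3. -/
def CNOT12 : Matrix (Fin 2 × Fin 2 × Fin 2) (Fin 2 × Fin 2 × Fin 2) ℂ :=
  Matrix.of fun p q => (ctrl σx) (p.1, p.2.1) (q.1, q.2.1) * (if p.2.2 = q.2.2 then 1 else 0)

/-- C-V on qubits 1 (control) and 3 (target), identity on qubit 2. -/
def CV13 : Matrix (Fin 2 × Fin 2 × Fin 2) (Fin 2 × Fin 2 × Fin 2) ℂ :=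
  Matrix.of fun p q => (ctrl Vgate) (p.1, p.2.2) (q.1, q.2.2) * (if p.2.1 = q.2.1 then 1 else 0)

/-- The Toffoli gate `|a,b,c⟩ ↦ |a,b,(a·b)⊕c⟩`. -/
def Toffoli : Matrix (Fin 2 × Fin 2 × Fin 2) (Fin 2 × Fin 2 × Fin 2) ℂ :=
  Matrix.of fun p q =>
    if p.1 = q.1 ∧ p.2.1 = q.2.1 ∧ p.2.2 = q.2.2 + q.1 * q.2.1 then 1 else 0

/-! Every gate of the circuit is block diagonal with respect to the first qubit, so the identity
splits into two identities of two-qubit gates. When the first qubit is `0` the circuit reduces to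
`C-V · (C-V)† = 1`. When it is `1`, conjugating `C-V†` by `σx ⊗ 1` turns it into the gate applying
`V†` when the control is `0`, and the circuit becomes
`diag(1, V) · diag(V†, 1) · diag(V, V) = diag(1, V²) = C-σx`. -/

namespace Matrix

variable {o n α : Type*}

/-- `blockDiagonal` with the block index as the first coordinate, as in `diagonal a ⊗ₖ B`. -/
def blockDiagonalFst [Zero α] [DecidableEq o] (B : o → Matrix n n α) :
    Matrix (o × n) (o × n) α :=
  reindex (Equiv.prodComm n o) (Equiv.prodComm n o) (blockDiagonal B)

theorem blockDiagonalFst_apply [Zero α] [DecidableEq o] (B : o → Matrix n n α) (a b : o)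
    (i j : n) : blockDiagonalFst B (a, i) (b, j) = if a = b then B a i j else 0 := by
  simp [blockDiagonalFst, blockDiagonal_apply]

theorem blockDiagonalFst_mul [Fintype o] [Fintype n] [DecidableEq o]
    [NonUnitalNonAssocSemiring α] (B C : o → Matrix n n α) :
    blockDiagonalFst B * blockDiagonalFst C = blockDiagonalFst (B * C) := by
  simp only [blockDiagonalFst, reindex_apply, submatrix_mul_equiv, ← blockDiagonal_mul]
  rfl

theorem blockDiagonalFst_fin_two_mul [Fintype n] [NonUnitalNonAssocSemiring α]
    (A B C D : Matrix n n α) :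
    blockDiagonalFst ![A, B] * blockDiagonalFst ![C, D] = blockDiagonalFst ![A * C, B * D] := by
  rw [blockDiagonalFst_mul]
  congr 1
  ext a : 1
  fin_cases a <;> rfl

theorem blockDiagonalFst_conjTranspose [DecidableEq o] [AddMonoid α] [StarAddMonoid α]
    (B : o → Matrix n n α) : (blockDiagonalFst B)ᴴ = blockDiagonalFst fun a => (B a)ᴴ := by
  simp [blockDiagonalFst, blockDiagonal_conjTranspose]

theorem one_kronecker_eq_blockDiagonalFst [DecidableEq o] [MulZeroOneClass α]
    (A : Matrix n n α) : (1 : Matrix o o α) ⊗ₖ A = blockDiagonalFst fun _ => A := by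
  ext ⟨a, i⟩ ⟨b, j⟩
  simp [blockDiagonalFst_apply, one_apply, ite_mul]

theorem σx_kronecker_one_conj [Fintype n] [DecidableEq n] (A B : Matrix n n ℂ) :
    σx ⊗ₖ (1 : Matrix n n ℂ) * blockDiagonalFst ![A, B] * σx ⊗ₖ (1 : Matrix n n ℂ) =
      blockDiagonalFst ![B, A] := by
  ext ⟨a, i⟩ ⟨b, j⟩
  fin_cases a <;> fin_cases b <;>
    simp [mul_apply, Fintype.sum_prod_type, blockDiagonalFst_apply, σx, one_apply]

end Matrix

theorem ctrl_eq_blockDiagonalFst (W : Matrix (Fin 2) (Fin 2) ℂ) :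
    ctrl W = blockDiagonalFst ![1, W] := by
  ext ⟨a, i⟩ ⟨b, j⟩
  fin_cases a <;> fin_cases b <;> simp [ctrl, blockDiagonalFst_apply, one_apply]

theorem ctrl_one : ctrl 1 = 1 := by
  ext ⟨a, i⟩ ⟨b, j⟩
  simp [ctrl, one_apply, Prod.ext_iff, ite_and]

theorem ctrl_mul_ctrl (W W' : Matrix (Fin 2) (Fin 2) ℂ) : ctrl W * ctrl W' = ctrl (W * W') := by
  simp only [ctrl_eq_blockDiagonalFst, blockDiagonalFst_fin_two_mul, mul_one]

theorem ctrl_conjTranspose (W : Matrix (Fin 2) (Fin 2) ℂ) : (ctrl W)ᴴ = ctrl Wᴴ := by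
  rw [ctrl_eq_blockDiagonalFst, ctrl_eq_blockDiagonalFst, blockDiagonalFst_conjTranspose]
  congr 1
  ext a : 1
  fin_cases a <;> simp

theorem ctrl_mul_self_decomposition {V : Matrix (Fin 2) (Fin 2) ℂ}
    (hV : V ∈ unitaryGroup (Fin 2) ℂ) :
    ctrl V * σx ⊗ₖ (1 : Matrix (Fin 2) (Fin 2) ℂ) * (ctrl V)ᴴ *
      σx ⊗ₖ (1 : Matrix (Fin 2) (Fin 2) ℂ) * (1 : Matrix (Fin 2) (Fin 2) ℂ) ⊗ₖ V =
        ctrl (V * V) := by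
  have hV₁ : Vᴴ * V = 1 := (mem_unitaryGroup_iff' ..).1 hV
  have hV₂ : (fun _ : Fin 2 => V) = ![V, V] := by
    ext a : 1
    fin_cases a <;> rfl
  calc _ = ctrl V * (σx ⊗ₖ 1 * blockDiagonalFst ![1, Vᴴ] * σx ⊗ₖ 1) *
        blockDiagonalFst ![V, V] := by
        rw [ctrl_conjTranspose, ctrl_eq_blockDiagonalFst Vᴴ, one_kronecker_eq_blockDiagonalFst, hV₂]
        simp only [Matrix.mul_assoc]
    _ = blockDiagonalFst ![1 * Vᴴ * V, V * 1 * V] := by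
        rw [σx_kronecker_one_conj, ctrl_eq_blockDiagonalFst, blockDiagonalFst_fin_two_mul,
          blockDiagonalFst_fin_two_mul]
    _ = ctrl (V * V) := by
        rw [Matrix.one_mul, Matrix.mul_one, hV₁, ctrl_eq_blockDiagonalFst]

theorem Vgate_mul_self : Vgate * Vgate = σx := by
  ext i j
  fin_cases i <;> fin_cases j <;>
    simp [Vgate, σx, mul_apply, Fin.sum_univ_two, Complex.ext_iff] <;> norm_num

theorem Vgate_mem_unitaryGroup : Vgate ∈ unitaryGroup (Fin 2) ℂ := by
  rw [mem_unitaryGroup_iff]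
  ext i j
  fin_cases i <;> fin_cases j <;>
    simp [Vgate, mul_apply, Fin.sum_univ_two, Complex.ext_iff] <;> norm_num

theorem Toffoli_eq_blockDiagonalFst : Toffoli = blockDiagonalFst ![1, ctrl σx] := by
  ext ⟨a, b, c⟩ ⟨a', b', c'⟩
  fin_cases a <;> fin_cases a' <;> fin_cases b <;> fin_cases b' <;> fin_cases c <;>
    fin_cases c' <;> simp [Toffoli, blockDiagonalFst_apply, ctrl, σx, one_apply, Prod.ext_iff]

theorem CV23_eq_blockDiagonalFst : CV23 = blockDiagonalFst fun _ => ctrl Vgate :=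
  one_kronecker_eq_blockDiagonalFst _

theorem CNOT12_eq_blockDiagonalFst :
    CNOT12 = blockDiagonalFst ![1, σx ⊗ₖ (1 : Matrix (Fin 2) (Fin 2) ℂ)] := by
  ext ⟨a, i, k⟩ ⟨b, j, l⟩
  fin_cases a <;> fin_cases b <;>
    simp [CNOT12, ctrl_eq_blockDiagonalFst, blockDiagonalFst_apply, one_apply, Prod.ext_iff,
      ← ite_and, and_comm]

theorem CV13_eq_blockDiagonalFst :
    CV13 = blockDiagonalFst ![1, (1 : Matrix (Fin 2) (Fin 2) ℂ) ⊗ₖ Vgate] := by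
  ext ⟨a, j, k⟩ ⟨b, j', k'⟩
  fin_cases a <;> fin_cases b <;>
    simp [CV13, ctrl_eq_blockDiagonalFst, blockDiagonalFst_apply, one_apply, Prod.ext_iff,
      ite_and, mul_comm]

/-- The Toffoli gate decomposes into five two-qubit gates using the square root of NOT:
`Toffoli = CV₂₃ · CNOT₁₂ · CV₂₃† · CNOT₁₂ · CV₁₃`. -/
theorem toffoli_decomposition :
    Toffoli = CV23 * CNOT12 * CV23ᴴ * CNOT12 * CV13 := by
  rw [Toffoli_eq_blockDiagonalFst, CV23_eq_blockDiagonalFst, CNOT12_eq_blockDiagonalFst,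
    CV13_eq_blockDiagonalFst, blockDiagonalFst_conjTranspose]
  simp only [blockDiagonalFst_mul]
  congr 1
  ext a : 1
  fin_cases a
  · have hV : Vgate * Vgateᴴ = 1 := (mem_unitaryGroup_iff ..).1 Vgate_mem_unitaryGroup
    simp [ctrl_conjTranspose, ctrl_mul_ctrl, hV, ctrl_one]
  · simpa [Vgate_mul_self] using (ctrl_mul_self_decomposition Vgate_mem_unitaryGroup).symm

end
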